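/- Let ν ≥ 0 be real. Then for all x > 0 one has the Turán type inequality I_ν(x)² − I_{ν−1}(x)·I_{ν+1}(x) < (2/(x + ν)) · I_ν(x)². -/

import Mathlib

open Real

/-- The modified Bessel function of the first kind of real order `ν`,
`I_ν(x) = ∑_{n≥0} (x/2)^(2n+ν) / (n! Γ(n+ν+1))`. -/
noncomputable def besselI (ν x : ℝ) : ℝ :=
  ∑' n : ℕ, (x / 2) ^ (2 * (n : ℝ) + ν) / ((n.factorial : ℝ) * Real.Gamma ((n : ℝ) + ν + 1))

/-- The modified Bessel function of the second kind of real order `ν`,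
`K_ν(x) = ∫_0^∞ e^{-x cosh t} cosh(ν t) dt`. -/
noncomputable def besselK (ν x : ℝ) : ℝ :=
  ∫ t in Set.Ioi (0 : ℝ), Real.exp (-x * Real.cosh t) * Real.cosh (ν * t)

/-!
Write `I_ν(x) = (x/2)^ν S_{ν+1}((x/2)²)` with `S_c(y) = ∑ yⁿ / (n! Γ(n+c))`. By Chu–Vandermonde the
`n`-th Cauchy coefficient of `S_c S_d` is `(2n+c+d-2)_n / (n! Γ(n+c) Γ(n+d))` (falling factorial), so
comparing `S_μ S_{μ+2}` with `S_{μ+1}²` reduces to `Γ(s+1)² < Γ(s) Γ(s+2)`: this is the Turán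
inequality `I_{μ-1} I_{μ+1} < I_μ²` for `μ > 0`. Together with the recurrence
`I_{ν-1} = I_{ν+1} + (2ν/x) I_ν`, the case `μ = ν + 1` gives `x (I_ν² - I_{ν-1} I_{ν+1}) < 2 I_ν I_{ν+1}`
and the case `μ = ν` gives `(x + ν) I_{ν+1} < x I_ν`, which combine to the claim. For `ν = 0`,
where `I_{-1} = I_1`, the second bound is replaced by comparing `I_1` with `I_0` by cases.
-/

open Real Finset Filter Polynomial
open scoped Nat

noncomputable def besselTerm (c y : ℝ) (n : ℕ) : ℝ := y ^ n / (n ! * Gamma (n + c))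

noncomputable def besselSeries (c y : ℝ) : ℝ := ∑' n, besselTerm c y n

lemma one_le_Gamma_of_two_le {s : ℝ} (hs : 2 ≤ s) : 1 ≤ Gamma s :=
  Gamma_two ▸ Gamma_strictMonoOn_Ici.monotoneOn (Set.mem_Ici.mpr le_rfl) hs hs

lemma summable_besselTerm (c y : ℝ) : Summable (besselTerm c y) := by
  refine .of_norm_bounded_eventually_nat (Real.summable_pow_div_factorial |y|) ?_
  filter_upwards [eventually_ge_atTop ⌈2 - c⌉₊] with n hn
  have hΓ : 1 ≤ Gamma (n + c) := one_le_Gamma_of_two_le (by linarith [Nat.ceil_le.mp hn])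
  rw [besselTerm, norm_div, norm_mul, norm_pow, Real.norm_eq_abs, Real.norm_natCast,
    Real.norm_of_nonneg (by positivity)]
  gcongr
  exact le_mul_of_one_le_right (by positivity) hΓ

lemma besselTerm_nonneg {c y : ℝ} (hc : 0 ≤ c) (hy : 0 ≤ y) (n : ℕ) : 0 ≤ besselTerm c y n := by
  unfold besselTerm; positivity

lemma besselSeries_pos {c y : ℝ} (hc : 0 < c) (hy : 0 ≤ y) : 0 < besselSeries c y :=
  (summable_besselTerm c y).tsum_pos (besselTerm_nonneg hc.le hy) 0 (by simp [besselTerm]; positivity)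

lemma besselI_eq_rpow_mul_besselSeries (ν : ℝ) {x : ℝ} (hx : 0 < x) :
    besselI ν x = (x / 2) ^ ν * besselSeries (ν + 1) ((x / 2) ^ 2) := by
  rw [besselI, besselSeries, ← tsum_mul_left]
  congr 1 with n
  rw [besselTerm, rpow_add (by positivity), mul_comm (2 : ℝ), rpow_mul (by positivity),
    rpow_natCast, rpow_two, add_assoc, ← pow_mul, ← pow_mul, mul_comm n]
  ring

lemma besselI_pos {ν x : ℝ} (hν : -1 < ν) (hx : 0 < x) : 0 < besselI ν x := by
  rw [besselI_eq_rpow_mul_besselSeries ν hx]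
  exact mul_pos (by positivity) (besselSeries_pos (by linarith) (by positivity))

-- Also true at the poles, where Mathlib's `Gamma` takes the value `0`.
lemma Gamma_inv_eq_mul_Gamma_add_one_inv (s : ℝ) : (Gamma s)⁻¹ = s * (Gamma (s + 1))⁻¹ := by
  rcases eq_or_ne s 0 with rfl | hs
  · simp
  · rw [Gamma_add_one hs, mul_inv, mul_inv_cancel_left₀ hs]

lemma besselTerm_eq_add (c y : ℝ) (n : ℕ) :
    besselTerm c y n = n * besselTerm (c + 1) y n + c * besselTerm (c + 1) y n := by
  simp only [besselTerm, div_eq_mul_inv, mul_inv, Gamma_inv_eq_mul_Gamma_add_one_inv (n + c),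
    add_assoc]
  ring

lemma succ_mul_besselTerm_succ (c y : ℝ) (n : ℕ) :
    ((n : ℝ) + 1) * besselTerm c y (n + 1) = y * besselTerm (c + 1) y n := by
  simp only [besselTerm, Nat.factorial_succ]
  push_cast
  rw [show (n : ℝ) + 1 + c = n + (c + 1) by ring]
  field_simp
  ring

lemma besselSeries_eq_add (c y : ℝ) :
    besselSeries c y = y * besselSeries (c + 2) y + c * besselSeries (c + 1) y := by
  have hsucc := succ_mul_besselTerm_succ (c + 1) y
  rw [add_assoc, one_add_one_eq_two] at hsucc
  have hsummable : Summable fun n : ℕ ↦ (n : ℝ) * besselTerm (c + 1) y n := by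
    rw [← summable_nat_add_iff 1]
    simpa [hsucc] using (summable_besselTerm (c + 2) y).mul_left y
  have hshift : ∑' n : ℕ, (n : ℝ) * besselTerm (c + 1) y n = y * besselSeries (c + 2) y := by
    simp [hsummable.tsum_eq_zero_add, hsucc, besselSeries, tsum_mul_left]
  rw [besselSeries, tsum_congr (besselTerm_eq_add c y),
    hsummable.tsum_add ((summable_besselTerm _ y).mul_left c), hshift, tsum_mul_left]
  rfl

lemma besselI_sub_one_eq_add (ν : ℝ) {x : ℝ} (hx : 0 < x) :
    besselI (ν - 1) x = besselI (ν + 1) x + 2 * ν / x * besselI ν x := by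
  have hx2 : 0 < x / 2 := by positivity
  have h1 : (x / 2) ^ ν = (x / 2) ^ (ν - 1) * (x / 2) := by
    rw [← rpow_add_one hx2.ne', sub_add_cancel]
  have h2 : (x / 2) ^ (ν + 1) = (x / 2) ^ (ν - 1) * (x / 2) ^ 2 := by
    rw [← rpow_two, ← rpow_add hx2]; ring_nf
  simp only [besselI_eq_rpow_mul_besselSeries _ hx, sub_add_cancel]
  rw [besselSeries_eq_add ν, show ν + 1 + 1 = ν + 2 by ring, h1, h2]
  field_simp

lemma descPochhammer_smeval_eq_eval {R : Type*} [Ring R] (r : R) (n : ℕ) :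
    (descPochhammer ℤ n).smeval r = (descPochhammer R n).eval r := by
  rw [← aeval_eq_smeval, aeval_def, ← eval_map, descPochhammer_map]

lemma descPochhammer_eval_add {R : Type*} [CommRing R] (r s : R) (n : ℕ) :
    (descPochhammer R n).eval (r + s) = ∑ ij ∈ antidiagonal n,
      n.choose ij.1 * ((descPochhammer R ij.1).eval r * (descPochhammer R ij.2).eval s) := by
  simpa only [descPochhammer_smeval_eq_eval] using Ring.descPochhammer_smeval_add n (Commute.all r s)

lemma Gamma_add_nat_eq_ascPochhammer_mul {s : ℝ} (hs : 0 < s) (n : ℕ) :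
    Gamma (s + n) = (ascPochhammer ℝ n).eval s * Gamma s := by
  induction n with
  | zero => simp
  | succ n ih =>
    rw [Nat.cast_succ, ← add_assoc, Gamma_add_one (by positivity), ih, ascPochhammer_succ_eval]
    ring

lemma Gamma_add_nat_eq_descPochhammer_mul {s : ℝ} (hs : 0 < s) (n : ℕ) :
    Gamma (s + n) = (descPochhammer ℝ n).eval (s + n - 1) * Gamma s := by
  rw [descPochhammer_eval_eq_ascPochhammer, show s + n - 1 - n + 1 = s by ring,
    Gamma_add_nat_eq_ascPochhammer_mul hs]

lemma besselTerm_mul_besselTerm {c d : ℝ} (hc : 0 < c) (hd : 0 < d) (y : ℝ) (k l : ℕ) :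
    besselTerm c y k * besselTerm d y l =
      y ^ (k + l) * ((k + l).choose k * ((descPochhammer ℝ k).eval ((k + l : ℕ) + d - 1) *
        (descPochhammer ℝ l).eval ((k + l : ℕ) + c - 1))) /
      ((k + l)! * Gamma ((k + l : ℕ) + c) * Gamma ((k + l : ℕ) + d)) := by
  have hΓc := Gamma_add_nat_eq_descPochhammer_mul (show 0 < k + c by positivity) l
  have hΓd := Gamma_add_nat_eq_descPochhammer_mul (show 0 < l + d by positivity) k
  have hfact := Nat.add_choose_mul_factorial_mul_factorial k l
  rw [← Nat.choose_symm_add] at hfact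
  rw [show (k : ℝ) + c + l = (k + l : ℕ) + c by push_cast; ring] at hΓc
  rw [show (l : ℝ) + d + k = (k + l : ℕ) + d by push_cast; ring] at hΓd
  have hPc : 0 < (descPochhammer ℝ l).eval ((k + l : ℕ) + c - 1) :=
    descPochhammer_pos (by push_cast; linarith)
  have hPd : 0 < (descPochhammer ℝ k).eval ((k + l : ℕ) + d - 1) :=
    descPochhammer_pos (by push_cast; linarith)
  have hchoose : 0 < ((k + l).choose k : ℝ) := by exact_mod_cast Nat.choose_pos (by omega)
  rw [besselTerm, besselTerm, hΓc, hΓd, ← hfact, pow_add, Nat.cast_mul, Nat.cast_mul]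
  field_simp

-- Apart from `Γ(n + c) Γ(n + d)`, the Cauchy coefficient depends on `c` and `d` only through `c + d`.
lemma sum_antidiagonal_besselTerm_mul {c d : ℝ} (hc : 0 < c) (hd : 0 < d) (y : ℝ) (n : ℕ) :
    ∑ kl ∈ antidiagonal n, besselTerm c y kl.1 * besselTerm d y kl.2 =
      y ^ n * (descPochhammer ℝ n).eval (2 * n + (c + d) - 2) /
        (n ! * Gamma (n + c) * Gamma (n + d)) := by
  rw [show 2 * (n : ℝ) + (c + d) - 2 = (n + d - 1) + (n + c - 1) by ring,
    descPochhammer_eval_add, mul_sum, sum_div]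
  refine sum_congr rfl fun kl hkl ↦ ?_
  obtain rfl := mem_antidiagonal.mp hkl
  exact besselTerm_mul_besselTerm hc hd y kl.1 kl.2

lemma Gamma_add_one_sq_lt {s : ℝ} (hs : 0 < s) : Gamma (s + 1) ^ 2 < Gamma s * Gamma (s + 2) := by
  rw [show s + 2 = s + 1 + 1 by ring, Gamma_add_one (s := s + 1) (by positivity),
    Gamma_add_one hs.ne']
  have hΓ := Gamma_pos_of_pos hs
  nlinarith [mul_pos hs (mul_pos hΓ hΓ)]

lemma sum_antidiagonal_besselTerm_mul_lt {μ y : ℝ} (hμ : 0 < μ) (hy : 0 < y) (n : ℕ) :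
    ∑ kl ∈ antidiagonal n, besselTerm μ y kl.1 * besselTerm (μ + 2) y kl.2 <
      ∑ kl ∈ antidiagonal n, besselTerm (μ + 1) y kl.1 * besselTerm (μ + 1) y kl.2 := by
  rw [sum_antidiagonal_besselTerm_mul hμ (by positivity),
    sum_antidiagonal_besselTerm_mul (by positivity) (by positivity),
    show μ + (μ + 2) = μ + 1 + (μ + 1) by ring]
  have hP : 0 < (descPochhammer ℝ n).eval (2 * n + (μ + 1 + (μ + 1)) - 2) :=
    descPochhammer_pos (by linarith)
  apply div_lt_div_of_pos_left (by positivity) (by positivity)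
  rw [mul_assoc, mul_assoc, ← sq, show (n : ℝ) + (μ + 2) = n + μ + 2 by ring,
    show (n : ℝ) + (μ + 1) = n + μ + 1 by ring]
  gcongr
  exact Gamma_add_one_sq_lt (by positivity)

lemma besselSeries_mul_lt_sq {μ y : ℝ} (hμ : 0 < μ) (hy : 0 < y) :
    besselSeries μ y * besselSeries (μ + 2) y < besselSeries (μ + 1) y ^ 2 := by
  have hnorm (c : ℝ) : Summable fun n ↦ ‖besselTerm c y n‖ := (summable_besselTerm c y).norm
  rw [besselSeries, besselSeries, sq, besselSeries,
    tsum_mul_tsum_eq_tsum_sum_antidiagonal_of_summable_norm (hnorm _) (hnorm _),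
    tsum_mul_tsum_eq_tsum_sum_antidiagonal_of_summable_norm (hnorm _) (hnorm _)]
  exact Summable.tsum_lt_tsum_of_nonneg
    (fun n ↦ sum_nonneg fun kl _ ↦
      mul_nonneg (besselTerm_nonneg hμ.le hy.le _) (besselTerm_nonneg (by positivity) hy.le _))
    (fun n ↦ (sum_antidiagonal_besselTerm_mul_lt hμ hy n).le)
    (sum_antidiagonal_besselTerm_mul_lt hμ hy 0)
    (summable_norm_sum_mul_antidiagonal_of_summable_norm (hnorm _) (hnorm _)).of_norm

lemma besselI_mul_lt_sq {ν x : ℝ} (hν : 0 < ν) (hx : 0 < x) :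
    besselI (ν - 1) x * besselI (ν + 1) x < besselI ν x ^ 2 := by
  simp only [besselI_eq_rpow_mul_besselSeries _ hx, sub_add_cancel, add_assoc, one_add_one_eq_two]
  have hpow : (x / 2) ^ (ν - 1) * (x / 2) ^ (ν + 1) = ((x / 2) ^ ν) ^ 2 := by
    rw [← rpow_add (by positivity), ← rpow_natCast, ← rpow_mul (by positivity)]
    ring_nf
  calc _ = ((x / 2) ^ ν) ^ 2 * (besselSeries ν ((x / 2) ^ 2) *
          besselSeries (ν + 2) ((x / 2) ^ 2)) := by rw [← hpow]; ring
    _ < ((x / 2) ^ ν) ^ 2 * besselSeries (ν + 1) ((x / 2) ^ 2) ^ 2 := by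
      gcongr
      exact besselSeries_mul_lt_sq hν (by positivity)
    _ = _ := by ring

lemma mul_besselI_sq_sub_mul_lt {ν x : ℝ} (hν : -1 < ν) (hx : 0 < x) :
    x * (besselI ν x ^ 2 - besselI (ν - 1) x * besselI (ν + 1) x) <
      2 * besselI ν x * besselI (ν + 1) x := by
  have hA := besselI_sub_one_eq_add ν hx
  have hB := besselI_sub_one_eq_add (ν + 1) hx
  have hturan := besselI_mul_lt_sq (show 0 < ν + 1 by linarith) hx
  rw [add_sub_cancel_right] at hB hturan
  set A := besselI (ν - 1) x
  set B := besselI ν x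
  set C := besselI (ν + 1) x
  set D := besselI (ν + 1 + 1) x
  have hBD : x * (B * D) = x * B ^ 2 - 2 * (ν + 1) * B * C := by
    rw [show D = B - 2 * (ν + 1) / x * C by linarith]
    field_simp
  have hAC : x * (A * C) = x * C ^ 2 + 2 * ν * B * C := by
    rw [hA]
    field_simp
  nlinarith [mul_lt_mul_of_pos_left hturan hx]

lemma add_mul_besselI_add_one_lt {ν x : ℝ} (hν : 0 < ν) (hx : 0 < x) :
    (x + ν) * besselI (ν + 1) x < x * besselI ν x := by
  have hB := besselI_pos (show -1 < ν by linarith) hx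
  have hC := besselI_pos (show -1 < ν + 1 by linarith) hx
  have hA := besselI_sub_one_eq_add ν hx
  have hturan := besselI_mul_lt_sq hν hx
  set A := besselI (ν - 1) x
  set B := besselI ν x
  set C := besselI (ν + 1) x
  have hAC : x * (A * C) = x * C ^ 2 + 2 * ν * B * C := by
    rw [hA]
    field_simp
  have hgap : 2 * ν * B * C < x * (B - C) * (B + C) := by
    nlinarith [mul_lt_mul_of_pos_left hturan hx]
  have hCB : C < B := by
    by_contra! hBC
    nlinarith [mul_nonneg (mul_nonneg hx.le (sub_nonneg.mpr hBC)) (add_pos hB hC).le,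
      mul_pos (mul_pos hν hB) hC]
  have hscaled : ν * C * (B + C) < x * (B - C) * (B + C) := by nlinarith [mul_pos hν hC]
  nlinarith [lt_of_mul_lt_mul_right hscaled (by positivity : 0 ≤ B + C)]

theorem turan_besselI_upper_two_over (ν : ℝ) (hν : 0 ≤ ν) (x : ℝ) (hx : 0 < x) :
    besselI ν x ^ 2 - besselI (ν - 1) x * besselI (ν + 1) x <
      2 / (x + ν) * besselI ν x ^ 2 := by
  have hB := besselI_pos (show -1 < ν by linarith) hx
  have hC := besselI_pos (show -1 < ν + 1 by linarith) hx
  have hgap := mul_besselI_sq_sub_mul_lt (show -1 < ν by linarith) hx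
  rw [div_mul_eq_mul_div, lt_div_iff₀ (by positivity)]
  rcases hν.eq_or_lt with rfl | hν
  · have hA : besselI (0 - 1) x = besselI (0 + 1) x := by
      simpa using besselI_sub_one_eq_add 0 hx
    rw [hA] at hgap ⊢
    rcases le_or_gt (besselI (0 + 1) x) (besselI 0 x) with hCB | hBC
    · nlinarith
    · nlinarith [mul_self_lt_mul_self hB.le hBC]
  · nlinarith [add_mul_besselI_add_one_lt hν hx]
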